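/- Define the non-associative product on symbols E_{m,s} := z^m D^s (m ∈ ℤ, s ∈ ℕ) by E_{m₁,s₁} ∘ E_{m₂,s₂} := Σ_{i=0}^{s₁} C(s₁,i) [m₂]^i E_{m₁+m₂, s₁+s₂−i}, where [m] := [m]_{p,q}. Then the elements L_m := E_{m,1} satisfy L_{m₁} ∘ L_{m₂} − L_{m₂} ∘ L_{m₁} = ([m₂]_{p,q} − [m₁]_{p,q}) E_{m₁+m₂,1}. -/
import Mathlib


/-- The (p,q)-number `[m]_{p,q}` for an integer `m`. -/
noncomputable def pqNumZ (p q : ℝ) (m : ℤ) : ℝ := (p ^ m - q ^ m) / (p - q)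

/-- The product of basis elements `E_{m₁,s₁} ∘ E_{m₂,s₂} :=
Σ_{i=0}^{s₁} C(s₁,i) [m₂]^i E_{m₁+m₂, s₁+s₂−i}` in the free ℝ-module with
basis `E_{m,s}`, `m ∈ ℤ`, `s ∈ ℕ` (modelled as `(ℤ × ℕ) →₀ ℝ`). -/
noncomputable def Eprod (p q : ℝ) (a b : ℤ × ℕ) : (ℤ × ℕ) →₀ ℝ :=
  ∑ i ∈ Finset.range (a.2 + 1),
    ((a.2.choose i : ℝ) * pqNumZ p q b.1 ^ i) •
      Finsupp.single (a.1 + b.1, a.2 + b.2 - i) (1 : ℝ)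

/-- The degree-one elements `L_m := E_{m,1}` satisfy
`L_{m₁} ∘ L_{m₂} − L_{m₂} ∘ L_{m₁} = ([m₂]_{p,q} − [m₁]_{p,q}) E_{m₁+m₂,1}`. -/
theorem Eprod_comm (p q : ℝ) (hp : p ≠ 0) (hq : q ≠ 0) (hpq : p ≠ q) (m₁ m₂ : ℤ) :
    Eprod p q (m₁, 1) (m₂, 1) - Eprod p q (m₂, 1) (m₁, 1)
      = (pqNumZ p q m₂ - pqNumZ p q m₁) • Finsupp.single (m₁ + m₂, 1) (1 : ℝ) := by
  simp only [Eprod, Finset.sum_range_succ, Finset.sum_range_zero, zero_add, Finsupp.smul_single, smul_eq_mul, mul_one, Nat.choose_zero_right, Nat.choose_one_right, pow_zero, pow_one, Nat.cast_one, one_mul, add_comm m₂ m₁, sub_smul]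
  abel
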